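/- arXiv:2301.12383 — 3 statements merged into one kernel-verified Lean document; each statement's English description precedes it below -/
import Mathlib

section
/- Define HIE(x) = E[Y | A = a, M = m^{(a+1)}, X = x] - E[Y | A = a, X = x], where m^{(a)} = E[M | A = a, X = x]. Under the linear SEM with interactions, HIE(x) = γ_M (I_s - B_M^T)^{-1} (β_A + B_{XA}^T x), independent of a. -/
open Matrix

/-- HIE(x) = E[Y | A = a, M = m^{(a+1)}, X = x] - E[Y | A = a, X = x]
equals `γ_M (I - B_Mᵀ)⁻¹ (β_A + B_{XA}ᵀ x)`, independent of `a`.  Here `m a`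
is the conditional mean of the mediators given `A = a, X = x`, characterized by
the structural fixed-point equation. -/
theorem heterogeneous_indirect_effect
    (p s : ℕ)
    (BX BXA : Matrix (Fin s) (Fin p) ℝ)
    (βA : Fin s → ℝ)
    (BM : Matrix (Fin s) (Fin s) ℝ)
    (hinv : IsUnit (1 - BM))
    (γX γXA : Fin p → ℝ) (γA : ℝ) (γM : Fin s → ℝ)
    (x : Fin p → ℝ)
    (m : ℝ → (Fin s → ℝ))                     -- m a = E[M | A = a, X = x]
    (hm : ∀ a, m a = BX.mulVec x + a • βA + a • (BXA.mulVec x) + BM.mulVec (m a))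
    (a : ℝ) :
    ((γX ⬝ᵥ x + γA * a + (γXA ⬝ᵥ x) * a + γM ⬝ᵥ m (a + 1))
      - (γX ⬝ᵥ x + γA * a + (γXA ⬝ᵥ x) * a + γM ⬝ᵥ m a))
      = γM ⬝ᵥ (1 - BM)⁻¹.mulVec (βA + BXA.mulVec x) := by
  have key : m (a + 1) - m a = (1 - BM)⁻¹.mulVec (βA + BXA.mulVec x) := by
    have h1 := hm (a + 1)
    have h2 := hm a
    have e1 : m (a + 1) - BM.mulVec (m (a + 1))
        = BX.mulVec x + (a + 1) • βA + (a + 1) • BXA.mulVec x := by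
      nth_rewrite 1 [h1]; abel
    have e2 : m a - BM.mulVec (m a)
        = BX.mulVec x + a • βA + a • BXA.mulVec x := by
      nth_rewrite 1 [h2]; abel
    have hd : (1 - BM).mulVec (m (a + 1) - m a) = βA + BXA.mulVec x := by
      rw [Matrix.sub_mulVec, Matrix.one_mulVec, Matrix.mulVec_sub]
      have hre : m (a + 1) - m a - (BM.mulVec (m (a + 1)) - BM.mulVec (m a))
          = (m (a + 1) - BM.mulVec (m (a + 1))) - (m a - BM.mulVec (m a)) := by abel
      rw [hre, e1, e2]
      ext i
      simp only [Pi.add_apply, Pi.sub_apply, Pi.smul_apply, smul_eq_mul]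
      ring
    have hdet : IsUnit (1 - BM).det := (Matrix.isUnit_iff_isUnit_det _).mp hinv
    calc m (a + 1) - m a
        = (1 - BM)⁻¹.mulVec ((1 - BM).mulVec (m (a + 1) - m a)) := by
          rw [Matrix.mulVec_mulVec, Matrix.nonsing_inv_mul _ hdet, Matrix.one_mulVec]
      _ = (1 - BM)⁻¹.mulVec (βA + BXA.mulVec x) := by rw [hd]
  have : γM ⬝ᵥ m (a + 1) - γM ⬝ᵥ m a = γM ⬝ᵥ (m (a + 1) - m a) := by
    rw [dotProduct_sub]
  rw [key] at this
  linarith [this]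
end

section
/- Under the extended linear SEM including X-M interaction in the outcome equation, Y = γ_X X + γ_A A + γ_{XA} X A + γ_M M + X^T Γ_{XM} M + ε_Y, the natural indirect effect is IE(x) = (γ_M + x^T Γ_{XM}) (I_s - B_M^T)^{-1} (β_A + B_{XA}^T x), the natural direct effect is DE(x) = γ_A + γ_{XA} x, and the total effect equals their sum. -/
open Matrix

/-- In the extended linear SEM with X–M interaction in the outcome
equation `Y = γ_X X + γ_A A + γ_{XA} X A + γ_M M + Xᵀ Γ_{XM} M + ε_Y`,
the natural indirect effect is
`IE(x) = (γ_M + xᵀ Γ_{XM}) (I - B_Mᵀ)⁻¹ (β_A + B_{XA}ᵀ x)`, the natural direct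
effect is `DE(x) = γ_A + γ_{XA} x`, and the total effect is their sum.  Here
`m a` is the conditional mean of the mediators given `A = a, X = x`. -/
theorem XM_interaction_effects
    (p s : ℕ)
    (BX BXA : Matrix (Fin s) (Fin p) ℝ)
    (βA : Fin s → ℝ)
    (BM : Matrix (Fin s) (Fin s) ℝ)
    (hinv : IsUnit (1 - BM))
    (γX γXA : Fin p → ℝ) (γA : ℝ) (γM : Fin s → ℝ)
    (ΓXM : Matrix (Fin p) (Fin s) ℝ)
    (x : Fin p → ℝ)
    (m : ℝ → (Fin s → ℝ))                     -- m a = E[M | A = a, X = x]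
    (hm : ∀ a, m a = BX.mulVec x + a • βA + a • (BXA.mulVec x) + BM.mulVec (m a))
    (a : ℝ) :
    -- E[Y | A = a, M = μ, X = x] in the extended model:
    let Ey : ℝ → (Fin s → ℝ) → ℝ := fun a' μ =>
      γX ⬝ᵥ x + γA * a' + (γXA ⬝ᵥ x) * a' + γM ⬝ᵥ μ + x ⬝ᵥ ΓXM.mulVec μ
    -- IE(x):
    (Ey a (m (a + 1)) - Ey a (m a)
        = (γM + ΓXM.vecMul x) ⬝ᵥ (1 - BM)⁻¹.mulVec (βA + BXA.mulVec x))
    -- DE(x):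
    ∧ (Ey (a + 1) (m a) - Ey a (m a) = γA + γXA ⬝ᵥ x)
    -- TE(x) = DE(x) + IE(x):
    ∧ (Ey (a + 1) (m (a + 1)) - Ey a (m a)
        = (γA + γXA ⬝ᵥ x)
          + (γM + ΓXM.vecMul x) ⬝ᵥ (1 - BM)⁻¹.mulVec (βA + BXA.mulVec x)) := by

  intro Ey
  set d : Fin s → ℝ := m (a + 1) - m a with hd
  have hdd : (1 - BM).mulVec d = βA + BXA.mulVec x := by
    have h1 := hm (a + 1)
    have h2 := hm a
    have : m (a+1) - m a = βA + BXA.mulVec x + BM.mulVec (m (a+1) - m a) := by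
      rw [Matrix.mulVec_sub]
      nth_rewrite 1 [h1]
      nth_rewrite 1 [h2]
      ext i
      simp [Pi.smul_apply, smul_eq_mul]
      ring
    rw [Matrix.sub_mulVec, Matrix.one_mulVec, hd]
    nth_rewrite 1 [this]
    abel
  have hdval : d = (1 - BM)⁻¹.mulVec (βA + BXA.mulVec x) := by
    have hdet : IsUnit (1 - BM).det := (Matrix.isUnit_iff_isUnit_det _).mp hinv
    calc d = ((1 - BM)⁻¹ * (1 - BM)).mulVec d := by
            rw [Matrix.nonsing_inv_mul _ hdet, Matrix.one_mulVec]
      _ = (1 - BM)⁻¹.mulVec ((1 - BM).mulVec d) := by rw [Matrix.mulVec_mulVec]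
      _ = (1 - BM)⁻¹.mulVec (βA + BXA.mulVec x) := by rw [hdd]
  have key : γM ⬝ᵥ m (a+1) + x ⬝ᵥ ΓXM.mulVec (m (a+1))
      - (γM ⬝ᵥ m a + x ⬝ᵥ ΓXM.mulVec (m a))
      = (γM + ΓXM.vecMul x) ⬝ᵥ (1 - BM)⁻¹.mulVec (βA + BXA.mulVec x) := by
    rw [← hdval, add_dotProduct]
    have hcross : ∀ v, x ⬝ᵥ ΓXM.mulVec v = ΓXM.vecMul x ⬝ᵥ v := fun v =>
      (Matrix.dotProduct_mulVec x ΓXM v)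
    simp only [hcross]
    rw [hd, dotProduct_sub, dotProduct_sub]
    ring
  refine ⟨?_, ?_, ?_⟩
  · simp only [Ey]
    linarith [key]
  · simp only [Ey]; ring
  · simp only [Ey]
    linarith [key]
end

section
/- For the trace-based acyclicity function h_1(B) = tr[(I + t B ⊙ B)^w] - w with t > 0, h_1(B) = 0 if and only if B is the weighted adjacency matrix of a directed acyclic graph; in particular h_1(B) ≥ 0 for all real w×w matrices B. -/
open Matrix

/-- A directed cycle of the graph with an edge `i → j` whenever `B i j ≠ 0`:
a closed walk of positive length through nonzero entries of `B`. -/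
def Matrix.HasDirectedCycle {w : ℕ} (B : Matrix (Fin w) (Fin w) ℝ) : Prop :=
  ∃ (n : ℕ) (c : ℕ → Fin w), 0 < n ∧ c n = c 0 ∧ ∀ k < n, B (c k) (c (k + 1)) ≠ 0

private lemma trace_expand (w : ℕ) (C : Matrix (Fin w) (Fin w) ℝ) (t : ℝ) :
    ((1 + t • C) ^ w).trace
      = ∑ m ∈ Finset.range (w+1), (w.choose m : ℝ) * t ^ m * (C ^ m).trace := by
  rw [add_comm, (Commute.one_right (t • C)).add_pow, Matrix.trace_sum]
  refine Finset.sum_congr rfl fun m hm => ?_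
  rw [one_pow, mul_one, smul_pow, ← (Nat.cast_commute (w.choose m) ((t^m) • C^m)).eq,
    ← nsmul_eq_mul, Matrix.trace_smul, Matrix.trace_smul, nsmul_eq_mul]
  rw [smul_eq_mul]; ring

private lemma entry_nonneg_pow {w : ℕ} {C : Matrix (Fin w) (Fin w) ℝ}
    (hC : ∀ i j, 0 ≤ C i j) (k : ℕ) : ∀ i j, 0 ≤ (C ^ k) i j := by
  induction k with
  | zero =>
      intro i j
      rw [pow_zero, Matrix.one_apply]
      split <;> norm_num
  | succ k ih =>
      intro i j
      rw [pow_succ, Matrix.mul_apply]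
      exact Finset.sum_nonneg fun l _ => mul_nonneg (ih i l) (hC l j)

private lemma pow_apply_pos {w : ℕ} {C : Matrix (Fin w) (Fin w) ℝ}
    (hC : ∀ i j, 0 ≤ C i j) (c : ℕ → Fin w) :
    ∀ k, (∀ m < k, 0 < C (c m) (c (m+1))) → 0 < (C ^ k) (c 0) (c k) := by
  intro k
  induction k with
  | zero => intro _; simp [Matrix.one_apply]
  | succ k ih =>
      intro h
      rw [pow_succ, Matrix.mul_apply]
      have h1 : 0 < (C ^ k) (c 0) (c k) * C (c k) (c (k+1)) :=
        mul_pos (ih fun m hm => h m (hm.trans (Nat.lt_succ_self k)))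
          (h k (Nat.lt_succ_self k))
      exact lt_of_lt_of_le h1 (Finset.single_le_sum
        (f := fun l => (C ^ k) (c 0) l * C l (c (k+1)))
        (fun l _ => mul_nonneg (entry_nonneg_pow hC k _ _) (hC _ _)) (Finset.mem_univ _))

private lemma exists_walk {w : ℕ} {C : Matrix (Fin w) (Fin w) ℝ} :
    ∀ (k : ℕ) (i j : Fin w), (C ^ k) i j ≠ 0 →
      ∃ c : ℕ → Fin w, c 0 = i ∧ c k = j ∧ ∀ m < k, C (c m) (c (m+1)) ≠ 0 := by
  intro k
  induction k with
  | zero =>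
      intro i j h
      rw [pow_zero, Matrix.one_apply] at h
      split_ifs at h with hij
      · exact ⟨fun _ => i, rfl, by simp [hij], fun m hm => absurd hm (Nat.not_lt_zero m)⟩
      · exact absurd rfl h
  | succ k ih =>
      intro i j h
      rw [pow_succ, Matrix.mul_apply] at h
      obtain ⟨l, -, hl⟩ := Finset.exists_ne_zero_of_sum_ne_zero h
      obtain ⟨h1, h2⟩ := mul_ne_zero_iff.mp hl
      obtain ⟨c, hc0, hck, hstep⟩ := ih i l h1
      refine ⟨fun m => if m ≤ k then c m else j, by simp [hc0], by simp, ?_⟩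
      intro m hm
      rcases Nat.lt_succ_iff_lt_or_eq.mp hm with hmk | hmk
      · simpa [Nat.le_of_lt hmk, Nat.succ_le_of_lt hmk] using hstep m hmk
      · subst hmk
        simpa [hck] using h2

private lemma short_cycle {w : ℕ} {B : Matrix (Fin w) (Fin w) ℝ}
    (h : B.HasDirectedCycle) :
    ∃ (n : ℕ) (c : ℕ → Fin w), 0 < n ∧ n ≤ w ∧ c n = c 0 ∧
      ∀ k < n, B (c k) (c (k + 1)) ≠ 0 := by
  obtain ⟨n, c, hn, hcn, hne⟩ := h
  by_cases hnw : n ≤ w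
  · exact ⟨n, c, hn, hnw, hcn, hne⟩
  · push_neg at hnw
    have hninj : ¬ Function.Injective (fun i : Fin (w+1) => c i) := by
      intro hinj
      have := Fintype.card_le_of_injective _ hinj
      simp at this
    obtain ⟨a, b, hab, hne'⟩ := Function.not_injective_iff.mp hninj
    wlog hlt : (a : ℕ) < (b : ℕ) generalizing a b
    · exact this b a hab.symm hne'.symm
        (lt_of_le_of_ne (Nat.le_of_not_lt hlt) (fun e => hne' (Fin.ext e.symm)))
    refine ⟨(b : ℕ) - (a : ℕ), fun m => c ((a : ℕ) + m), by omega, by omega, ?_, ?_⟩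
    · have : (a : ℕ) + ((b : ℕ) - (a : ℕ)) = (b : ℕ) := by omega
      simp only [this, Nat.add_zero]
      exact hab.symm
    · intro k hk
      have h1 : (a : ℕ) + k < n := by
        have := b.2; omega
      have := hne ((a : ℕ) + k) h1
      simpa [Nat.add_assoc] using this

/-- For the trace-based acyclicity function
`h₁(B) = tr[(I + t B⊙B)^w] - w` with `t > 0` (where `⊙` is the elementwise
square), `h₁(B) = 0` iff the directed graph of `B` has no directed cycle, and
`h₁(B) ≥ 0` for every real `w×w` matrix `B`. -/
theorem trace_acyclicity_characterization
    (w : ℕ)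
    (B : Matrix (Fin w) (Fin w) ℝ)
    (t : ℝ) (ht : 0 < t) :
    let C : Matrix (Fin w) (Fin w) ℝ := Matrix.of fun i j => (B i j) ^ 2
    let h₁ : ℝ := ((1 + t • C) ^ w).trace - w
    (h₁ = 0 ↔ ¬ B.HasDirectedCycle) ∧ 0 ≤ h₁ := by
  intro C h₁
  have hC : ∀ i j, 0 ≤ C i j := fun i j => sq_nonneg _
  have hCB : ∀ i j, (C i j ≠ 0 ↔ B i j ≠ 0) := by
    intro i j
    show (B i j) ^ 2 ≠ 0 ↔ B i j ≠ 0
    simp [pow_eq_zero_iff]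
  -- expansion
  have hexp : h₁ = ∑ m ∈ Finset.range w,
      (w.choose (m+1) : ℝ) * t ^ (m+1) * (C ^ (m+1)).trace := by
    show ((1 + t • C) ^ w).trace - w = _
    rw [trace_expand, Finset.sum_range_succ']
    simp [Matrix.trace_one]
  have htr_nonneg : ∀ k : ℕ, 0 ≤ (C ^ k).trace := by
    intro k
    exact Finset.sum_nonneg fun i _ => entry_nonneg_pow hC k i i
  have hterm_nonneg : ∀ m ∈ Finset.range w,
      0 ≤ (w.choose (m+1) : ℝ) * t ^ (m+1) * (C ^ (m+1)).trace := by
    intro m _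
    exact mul_nonneg (mul_nonneg (Nat.cast_nonneg _) (pow_nonneg ht.le _)) (htr_nonneg _)
  have h₁nonneg : 0 ≤ h₁ := by
    rw [hexp]; exact Finset.sum_nonneg hterm_nonneg
  refine ⟨⟨?_, ?_⟩, h₁nonneg⟩
  · -- h₁ = 0 → no cycle
    intro h0 hcyc
    obtain ⟨n, c, hn, hnw, hcn, hne⟩ := short_cycle hcyc
    have hdiag : 0 < (C ^ n) (c 0) (c n) := by
      refine pow_apply_pos hC c n fun m hm => ?_
      exact lt_of_le_of_ne (hC _ _) (Ne.symm ((hCB _ _).mpr (hne m hm)))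
    rw [hcn] at hdiag
    have htrpos : 0 < (C ^ n).trace :=
      lt_of_lt_of_le hdiag (Finset.single_le_sum
        (f := fun i => (C ^ n) i i)
        (fun i _ => entry_nonneg_pow hC n i i) (Finset.mem_univ (c 0)))
    have hmem : n - 1 ∈ Finset.range w := Finset.mem_range.mpr (by omega)
    have := (Finset.sum_eq_zero_iff_of_nonneg hterm_nonneg).mp (hexp ▸ h0) (n - 1) hmem
    have hn1 : n - 1 + 1 = n := by omega
    rw [hn1] at this
    have hch : (0 : ℝ) < (w.choose n : ℝ) := by
      exact_mod_cast Nat.choose_pos hnw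
    exact absurd this (ne_of_gt (mul_pos (mul_pos hch (pow_pos ht n)) htrpos))
  · -- no cycle → h₁ = 0
    intro hnc
    rw [hexp]
    refine Finset.sum_eq_zero fun m _ => ?_
    have htr : (C ^ (m+1)).trace = 0 := by
      by_contra htr
      obtain ⟨i, -, hi⟩ := Finset.exists_ne_zero_of_sum_ne_zero htr
      obtain ⟨c, hc0, hck, hstep⟩ := exists_walk (m+1) i i hi
      exact hnc ⟨m+1, c, Nat.succ_pos m, by rw [hck, hc0],
        fun k hk => (hCB _ _).mp (hstep k hk)⟩
    rw [htr, mul_zero]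
end
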